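/- Let d ≥ 2 and let p_1, p_2, … be i.i.d. random vectors uniformly distributed on the d-dimensional simplex S_d, and let Y_n denote the number of chain records of p_1,…,p_n. Then for every n ≥ 1, E[Y_n] = Σ_{k=1}^{n} C(n,k) (−1)^{k−1} ∏_{j=1}^{k−1} ( 1 − d!/((dj+1)(dj+2)⋯(dj+d)) ). -/

import Mathlib

open MeasureTheory ProbabilityTheory Filter Asymptotics Real Set

noncomputable section

attribute [local instance] Classical.propDecidable

/-- `prec q p` means `q ≺ p`, i.e. `p` strictly dominates `q` in every coordinate. -/
def prec {d : ℕ} (q p : Fin d → ℝ) : Prop := ∀ i, q i < p i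

/-- The `d`-dimensional simplex. -/
def simplex (d : ℕ) : Set (Fin d → ℝ) := {x | (∀ i, 0 ≤ x i) ∧ (∑ i, x i) ≤ 1}

/-- The hypercube `[0,1]^d`. -/
def cube (d : ℕ) : Set (Fin d → ℝ) := Set.univ.pi fun _ => Set.Icc 0 1

/-- The uniform probability measure on a set `S ⊆ ℝ^d`. -/
def unif {d : ℕ} (S : Set (Fin d → ℝ)) : Measure (Fin d → ℝ) :=
  (volume S)⁻¹ • volume.restrict S

/-- The number of Pareto records among `q 0, …, q (n-1)`. -/
def paretoCount {d : ℕ} (q : ℕ → Fin d → ℝ) (n : ℕ) : ℕ :=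
  ((Finset.range n).filter fun k => ∀ i < k, ¬ prec (q k) (q i)).card

/-- The number of maxima among `q 0, …, q (n-1)`. -/
def maxCount {d : ℕ} (q : ℕ → Fin d → ℝ) (n : ℕ) : ℕ :=
  ((Finset.range n).filter fun k => ∀ i < n, i ≠ k → ¬ prec (q k) (q i)).card

/-- The index of the most recent chain record among `q 0, …, q k`. -/
def chainLead {d : ℕ} (q : ℕ → Fin d → ℝ) : ℕ → ℕ
  | 0 => 0
  | k + 1 => if prec (q (chainLead q k)) (q (k + 1)) then k + 1 else chainLead q k

/-- The number of chain records among `q 0, …, q (n-1)`: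
`q 0` is a chain record, and `q k` is a chain record iff it dominates the most recent
chain record among `q 0, …, q (k-1)`. -/
def chainCount {d : ℕ} (q : ℕ → Fin d → ℝ) (n : ℕ) : ℕ :=
  ((Finset.range n).filter fun k => chainLead q k = k).card

/-- The number of dominating records among `q 0, …, q (n-1)`. -/
def domCount {d : ℕ} (q : ℕ → Fin d → ℝ) (n : ℕ) : ℕ :=
  ((Finset.range n).filter fun k => ∀ i < k, prec (q i) (q k)).card

/-- The harmonic-type sum `H_n^{(a)} = ∑_{j=1}^n j^{-a}`. -/
def genH (a n : ℕ) : ℝ := ∑ j ∈ Finset.range n, (1 : ℝ) / (j + 1 : ℝ) ^ a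

/-- The standard normal distribution function `Φ`. -/
def stdNormalCDF (x : ℝ) : ℝ := (gaussianReal 0 1 (Set.Iio x)).toReal

/-!
Let `ℓₖ` be the last chain record among the first `k` points, with the origin for `k = 0`; almost
surely the first point dominates the origin, so the chain records are exactly the points dominating
the current `ℓₖ`. Write `s(x) = 1 - ∑ xᵢ`. The points of the simplex dominating `x` form a translate
of the simplex scaled by `s(x)`, so the Dirichlet integral `∫_{S_d} s^m = m! / (m + d)!` gives
`E[s(y)^m; x ≺ y] = c_m s(x)^(m+d)` with `c_m = d! m! / (m + d)!` for `y` uniform; in particular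
`P(x ≺ y) = s(x)^d`. As `ℓₖ₊₁` is `ℓₖ` or the `(k+1)`-st point, which is independent of `ℓₖ`, the
sequences `fⱼ(k) = E[s(ℓₖ)^(dj)]` satisfy `Δfⱼ = -(1 - c_(dj)) fⱼ₊₁` with `fⱼ(0) = 1`, so
`Δⁱfⱼ(0) = (-1)ⁱ ∏_{l<i} (1 - c_(d(j+l)))`. Since `E[Y_n] = ∑_{k<n} f₁(k)`, Newton's
forward-difference formula gives the claim.
-/

open scoped Nat ENNReal

def scaledSimplex (d : ℕ) (c : ℝ) : Set (Fin d → ℝ) := {x | (∀ i, 0 ≤ x i) ∧ ∑ i, x i ≤ c}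

theorem scaledSimplex_one (d : ℕ) : scaledSimplex d 1 = simplex d := rfl

theorem measurableSet_scaledSimplex (d : ℕ) (c : ℝ) : MeasurableSet (scaledSimplex d c) := by
  unfold scaledSimplex
  measurability

theorem measurableSet_simplex (d : ℕ) : MeasurableSet (simplex d) :=
  measurableSet_scaledSimplex d 1

theorem scaledSimplex_zero_of_nonneg {c : ℝ} (hc : 0 ≤ c) : scaledSimplex 0 c = univ := by
  ext x; simp [scaledSimplex, hc]

theorem cons_mem_scaledSimplex_iff {d : ℕ} {c t : ℝ} {z : Fin d → ℝ} :
    (Fin.cons t z : Fin (d + 1) → ℝ) ∈ scaledSimplex (d + 1) c ↔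
      0 ≤ t ∧ z ∈ scaledSimplex d (c - t) := by
  simp only [scaledSimplex, mem_ofPred_eq, Fin.forall_fin_succ, Fin.cons_zero, Fin.cons_succ,
    Fin.sum_cons]
  constructor
  · rintro ⟨⟨ht, hz⟩, hs⟩; exact ⟨ht, hz, by linarith⟩
  · rintro ⟨ht, hz, hs⟩; exact ⟨⟨ht, hz⟩, by linarith⟩

theorem scaledSimplex_eq_empty_of_neg {d : ℕ} {c : ℝ} (hc : c < 0) : scaledSimplex d c = ∅ := by
  refine eq_empty_of_forall_notMem fun x ⟨hx, hs⟩ => ?_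
  linarith [Finset.sum_nonneg fun i (_ : i ∈ Finset.univ) => hx i]

theorem scaledSimplex_subset_Icc (d : ℕ) (c : ℝ) : scaledSimplex d c ⊆ Icc 0 fun _ => c :=
  fun _ ⟨hx, hs⟩ => ⟨hx, fun i =>
    (Finset.single_le_sum (fun j _ => hx j) (Finset.mem_univ i)).trans hs⟩

theorem isCompact_scaledSimplex (d : ℕ) (c : ℝ) : IsCompact (scaledSimplex d c) := by
  refine Metric.isCompact_of_isClosed_isBounded ?_
    ((Metric.isBounded_Icc _ _).subset (scaledSimplex_subset_Icc d c))
  simp only [scaledSimplex, ofPred_and, ofPred_forall]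
  exact (isClosed_iInter fun i => isClosed_le continuous_const (continuous_apply i)).inter
    (isClosed_le (by fun_prop) continuous_const)

theorem integral_Icc_zero_sub_pow (c : ℝ) (hc : 0 ≤ c) (n : ℕ) :
    ∫ t in Icc 0 c, (c - t) ^ n = c ^ (n + 1) / (n + 1) := by
  rw [integral_Icc_eq_integral_Ioc, ← intervalIntegral.integral_of_le hc,
    intervalIntegral.integral_comp_sub_left (fun u => u ^ n) c]
  simp [integral_pow]

theorem setIntegral_scaledSimplex_succ (d m : ℕ) (c : ℝ) :
    ∫ x in scaledSimplex (d + 1) c, (c - ∑ i, x i) ^ m =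
      ∫ t in Ici 0, ∫ z in scaledSimplex d (c - t), (c - t - ∑ i, z i) ^ m := by
  set e := (MeasurableEquiv.piFinSuccAbove (fun _ : Fin (d + 1) => ℝ) 0).symm
  have he : MeasurePreserving e := (volume_preserving_piFinSuccAbove _ 0).symm
  have he_apply (y : ℝ × (Fin d → ℝ)) : e y = Fin.cons y.1 y.2 := by
    simp [e, MeasurableEquiv.piFinSuccAbove, Fin.consEquiv]
  set f : (Fin (d + 1) → ℝ) → ℝ := (scaledSimplex (d + 1) c).indicator fun x => (c - ∑ i, x i) ^ m
  have hf : Integrable f :=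
    ((by fun_prop : Continuous fun x : Fin (d + 1) → ℝ => (c - ∑ i, x i) ^ m).continuousOn
      |>.integrableOn_compact (isCompact_scaledSimplex _ _)).integrable_indicator
      (measurableSet_scaledSimplex _ _)
  have hfe : Integrable (fun y => f (e y)) := (he.integrable_comp_emb e.measurableEmbedding).2 hf
  have hslice (t : ℝ) : ∫ z, f (e (t, z)) = (Ici 0).indicator
      (fun t => ∫ z in scaledSimplex d (c - t), (c - t - ∑ i, z i) ^ m) t := by
    by_cases ht : t ∈ Ici 0
    · rw [indicator_of_mem ht, ← integral_indicator (measurableSet_scaledSimplex _ _)]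
      congr with z
      simp [f, he_apply, indicator, cons_mem_scaledSimplex_iff, mem_Ici.1 ht, sub_sub]
    · rw [indicator_of_notMem ht]
      simp [f, he_apply, cons_mem_scaledSimplex_iff, mem_Ici.not.1 ht]
  rw [← integral_indicator (measurableSet_scaledSimplex _ _), ← he.integral_comp',
    Measure.volume_eq_prod, integral_prod _ hfe]
  simp only [hslice]
  rw [integral_indicator measurableSet_Ici]

theorem integral_scaledSimplex_pow (d m : ℕ) {c : ℝ} (hc : 0 ≤ c) :
    ∫ x in scaledSimplex d c, (c - ∑ i, x i) ^ m = c ^ (m + d) * (m ! / (m + d)! : ℝ) := by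
  induction d generalizing c with
  | zero =>
    rw [scaledSimplex_zero_of_nonneg hc, Measure.restrict_univ]
    have : (m ! : ℝ) ≠ 0 := by positivity
    simp [measureReal_def, volume_pi, this]
  | succ d ih =>
    have hslice : EqOn (fun t => ∫ z in scaledSimplex d (c - t), (c - t - ∑ i, z i) ^ m)
        ((Icc 0 c).indicator fun t => (c - t) ^ (m + d) * (m ! / (m + d)! : ℝ)) (Ici 0) := by
      intro t ht
      dsimp only
      by_cases htc : t ≤ c
      · rw [indicator_of_mem (show t ∈ Icc 0 c from ⟨ht, htc⟩), ih (sub_nonneg.2 htc)]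
      · rw [indicator_of_notMem fun h => htc h.2]
        simp [scaledSimplex_eq_empty_of_neg (sub_neg.2 (not_le.1 htc))]
    rw [setIntegral_scaledSimplex_succ, setIntegral_congr_fun measurableSet_Ici hslice,
      setIntegral_indicator measurableSet_Icc, inter_eq_right.2 Icc_subset_Ici_self,
      integral_mul_const, integral_Icc_zero_sub_pow c hc]
    push_cast [Nat.add_succ, Nat.factorial_succ]
    field_simp

theorem ae_forall_apply_ne (d : ℕ) (a : Fin d → ℝ) : ∀ᵐ z : Fin d → ℝ, ∀ i, z i ≠ a i :=
  ae_all_iff.2 fun i => by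
    simpa [ae_iff, volume_pi] using Measure.pi_hyperplane (fun _ => (volume : Measure ℝ)) i (a i)

theorem sum_nonneg_of_mem_simplex {d : ℕ} {x : Fin d → ℝ} (hx : x ∈ simplex d) : 0 ≤ ∑ i, x i :=
  Finset.sum_nonneg fun i _ => hx.1 i

theorem preimage_add_prec_inter_simplex_ae_eq {d : ℕ} {x : Fin d → ℝ} (hx : x ∈ simplex d) :
    (x + ·) ⁻¹' ({y | prec x y} ∩ simplex d) =ᵐ[volume] scaledSimplex d (1 - ∑ i, x i) := by
  filter_upwards [ae_forall_apply_ne d 0] with z hz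
  simp only [prec, simplex, scaledSimplex, preimage, mem_inter_iff, mem_ofPred_eq, Pi.add_apply,
    lt_add_iff_pos_right, Finset.sum_add_distrib, eq_iff_iff]
  constructor
  · rintro ⟨hpos, -, hs⟩
    exact ⟨fun i => (hpos i).le, by linarith⟩
  · rintro ⟨hnn, hs⟩
    exact ⟨fun i => (hnn i).lt_of_ne' (hz i), fun i => add_nonneg (hx.1 i) (hnn i), by linarith⟩

theorem setIntegral_prec_inter_simplex {d : ℕ} (m : ℕ) {x : Fin d → ℝ} (hx : x ∈ simplex d) :
    ∫ y in {y | prec x y} ∩ simplex d, (1 - ∑ i, y i) ^ m =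
      (1 - ∑ i, x i) ^ (m + d) * (m ! / (m + d)! : ℝ) := by
  rw [← (measurePreserving_add_left volume x).setIntegral_preimage_emb
    (measurableEmbedding_addLeft x),
    setIntegral_congr_set (preimage_add_prec_inter_simplex_ae_eq hx),
    ← integral_scaledSimplex_pow d m (sub_nonneg.2 hx.2)]
  simp only [Pi.add_apply, Finset.sum_add_distrib, sub_add_eq_sub_sub]

theorem volume_simplex (d : ℕ) : volume (simplex d) = ((d ! : ℝ≥0∞))⁻¹ := by
  have h := integral_scaledSimplex_pow d 0 zero_le_one
  simp only [pow_zero, one_pow, one_mul, Nat.factorial_zero, Nat.cast_one, zero_add,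
    integral_const, smul_eq_mul, mul_one, measureReal_restrict_apply_univ] at h
  rw [scaledSimplex_one] at h
  rw [← ofReal_measureReal (s := simplex d) (isCompact_scaledSimplex d 1).measure_lt_top.ne, h]
  rw [one_div, ENNReal.ofReal_inv_of_pos (by positivity), ENNReal.ofReal_natCast]

theorem zero_mem_simplex (d : ℕ) : (0 : Fin d → ℝ) ∈ simplex d := ⟨fun _ => le_rfl, by simp⟩

theorem unif_simplex (d : ℕ) : unif (simplex d) = (d ! : ℝ≥0∞) • volume.restrict (simplex d) := by
  rw [unif, volume_simplex, inv_inv]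

instance isProbabilityMeasure_unif_simplex (d : ℕ) : IsProbabilityMeasure (unif (simplex d)) := by
  constructor
  rw [unif, Measure.smul_apply, Measure.restrict_apply_univ, smul_eq_mul,
    ENNReal.inv_mul_cancel] <;> simp [volume_simplex, Nat.factorial_ne_zero]

theorem integral_unif_simplex {d : ℕ} (f : (Fin d → ℝ) → ℝ) :
    ∫ y, f y ∂unif (simplex d) = d ! * ∫ y in simplex d, f y := by
  rw [unif_simplex, integral_smul_measure]
  simp

theorem ae_unif_simplex (d : ℕ) : ∀ᵐ y ∂unif (simplex d), y ∈ simplex d ∧ prec 0 y := by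
  rw [unif_simplex]
  refine Measure.ae_smul_measure ?_ _
  filter_upwards [ae_restrict_mem₀ (measurableSet_simplex d).nullMeasurableSet,
    ae_restrict_of_ae (ae_forall_apply_ne d 0)] with y hy hy0
  exact ⟨hy, fun i => (hy.1 i).lt_of_ne' (hy0 i)⟩

theorem measurableSet_prec {d : ℕ} :
    MeasurableSet {z : (Fin d → ℝ) × (Fin d → ℝ) | prec z.1 z.2} := by
  simp only [prec, ofPred_forall]
  exact MeasurableSet.iInter fun i => measurableSet_lt (by fun_prop) (by fun_prop)

theorem measurableSet_setOf_prec {d : ℕ} (x : Fin d → ℝ) : MeasurableSet {y | prec x y} :=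
  measurableSet_prec.preimage measurable_prodMk_left

def slackWeight (d m : ℕ) : (Fin d → ℝ) → ℝ := (simplex d).indicator fun x => (1 - ∑ i, x i) ^ m

-- The `m`-th moment of `1 - ∑ yᵢ` for `y` uniform on the simplex.
def slackMoment (d m : ℕ) : ℝ := d ! * m ! / (m + d)!

theorem Nat.factorial_add_eq_mul_prod_Icc (m d : ℕ) :
    (m + d)! = m ! * ∏ i ∈ Finset.Icc 1 d, (m + i) := by
  induction d with
  | zero => simp
  | succ d ih =>
    rw [Finset.prod_Icc_succ_top (by omega), ← mul_assoc, ← ih, ← add_assoc, Nat.factorial_succ,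
      mul_comm]

theorem slackMoment_eq_div_prod (d m : ℕ) :
    slackMoment d m = d ! / ∏ i ∈ Finset.Icc 1 d, ((m + i : ℕ) : ℝ) := by
  have : (m ! : ℝ) ≠ 0 := by positivity
  rw [slackMoment, Nat.factorial_add_eq_mul_prod_Icc, Nat.cast_mul, Nat.cast_prod,
    mul_comm (m ! : ℝ), mul_div_mul_right _ _ this]

section SlackWeight

variable {d : ℕ}

theorem measurable_slackWeight (m : ℕ) : Measurable (slackWeight d m) :=
  (by fun_prop : Measurable fun x : Fin d → ℝ => (1 - ∑ i, x i) ^ m).indicator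
    (measurableSet_simplex d)

theorem slackWeight_mem_Icc (m : ℕ) (x : Fin d → ℝ) : slackWeight d m x ∈ Icc 0 1 := by
  by_cases hx : x ∈ simplex d
  · have := sum_nonneg_of_mem_simplex hx
    rw [slackWeight, indicator_of_mem hx]
    exact ⟨pow_nonneg (by linarith [hx.2]) m, pow_le_one₀ (by linarith [hx.2]) (by linarith)⟩
  · simp [slackWeight, hx]

theorem norm_slackWeight_le_one (m : ℕ) (x : Fin d → ℝ) : ‖slackWeight d m x‖ ≤ 1 := by
  obtain ⟨h0, h1⟩ := slackWeight_mem_Icc m x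
  rwa [Real.norm_of_nonneg h0]

theorem slackWeight_mul (m n : ℕ) (x : Fin d → ℝ) :
    slackWeight d m x * slackWeight d n x = slackWeight d (m + n) x := by
  by_cases hx : x ∈ simplex d <;> simp [slackWeight, hx, pow_add]

theorem slackWeight_zero (m : ℕ) : slackWeight d m 0 = 1 := by
  simp [slackWeight, zero_mem_simplex]

theorem integral_indicator_prec_slackWeight (m : ℕ) {x : Fin d → ℝ} (hx : x ∈ simplex d) :
    ∫ y, {y | prec x y}.indicator (slackWeight d m) y ∂unif (simplex d) =
      slackMoment d m * slackWeight d (m + d) x := by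
  rw [integral_unif_simplex, slackWeight, indicator_indicator,
    setIntegral_indicator ((measurableSet_setOf_prec x).inter (measurableSet_simplex d)),
    inter_eq_right.2 inter_subset_right, setIntegral_prec_inter_simplex m hx, slackWeight,
    indicator_of_mem hx, slackMoment]
  ring

theorem integral_indicator_prec_one {x : Fin d → ℝ} (hx : x ∈ simplex d) :
    ∫ y, {y | prec x y}.indicator 1 y ∂unif (simplex d) = slackWeight d d x := by
  have hae : {y | prec x y}.indicator (slackWeight d 0) =ᵐ[unif (simplex d)]
      {y | prec x y}.indicator 1 := by
    filter_upwards [ae_unif_simplex d] with y hy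
    simp [indicator, slackWeight, hy.1]
  rw [← integral_congr_ae hae, integral_indicator_prec_slackWeight 0 hx, zero_add]
  simp [slackMoment, Nat.factorial_ne_zero]

theorem integral_slackWeight_ite_prec (m : ℕ) {x : Fin d → ℝ} (hx : x ∈ simplex d) :
    ∫ y, slackWeight d m (if prec x y then y else x) ∂unif (simplex d) =
      slackWeight d m x - (1 - slackMoment d m) * slackWeight d (m + d) x := by
  have hsplit : (fun y => slackWeight d m (if prec x y then y else x)) = fun y =>
      {y | prec x y}.indicator (slackWeight d m) y +
        (slackWeight d m x - slackWeight d m x * {y | prec x y}.indicator 1 y) := by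
    ext y
    by_cases hy : prec x y <;> simp [hy]
  have hP := measurableSet_setOf_prec x
  have hint_w : Integrable ({y | prec x y}.indicator (slackWeight d m)) (unif (simplex d)) :=
    .of_bound ((measurable_slackWeight m).indicator hP).aestronglyMeasurable 1
      (ae_of_all _ fun y => (norm_indicator_le_norm_self _ y).trans (norm_slackWeight_le_one m y))
  have hint_1 : Integrable ({y | prec x y}.indicator (1 : (Fin d → ℝ) → ℝ)) (unif (simplex d)) :=
    (integrable_const 1).indicator hP
  have hint_2 : Integrable (fun y => slackWeight d m x - slackWeight d m x *
      {y | prec x y}.indicator 1 y) (unif (simplex d)) :=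
    (integrable_const _).sub (hint_1.const_mul _)
  rw [hsplit, integral_add hint_w hint_2,
    integral_sub (integrable_const _) (hint_1.const_mul _), integral_const_mul,
    integral_indicator_prec_slackWeight m hx, integral_indicator_prec_one hx, slackWeight_mul]
  simp only [integral_const, probReal_univ, one_smul]
  ring

end SlackWeight

theorem fwdDiff_iter_eq_of_fwdDiff_eq {R : Type*} [CommRing R] {f : ℕ → ℕ → R} {a : ℕ → R}
    (hf : ∀ j, fwdDiff 1 (f j) = -a j • f (j + 1)) (k j : ℕ) :
    (fwdDiff 1)^[k] (f j) = ((-1) ^ k * ∏ l ∈ Finset.range k, a (j + l)) • f (j + k) := by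
  induction k generalizing j with
  | zero => simp
  | succ k ih =>
    rw [Function.iterate_succ_apply, hf, fwdDiff_iter_const_smul, ih, smul_smul,
      Finset.prod_range_succ', add_right_comm j 1 k]
    simp only [add_zero, add_assoc, add_comm 1]
    ring_nf

theorem sum_range_eq_sum_choose_of_fwdDiff_eq {R : Type*} [CommRing R] {f : ℕ → ℕ → R} {a : ℕ → R}
    (hf : ∀ j, fwdDiff 1 (f j) = -a j • f (j + 1)) (hf0 : ∀ j, f j 0 = 1) (j n : ℕ) :
    ∑ k ∈ Finset.range n, f j k =
      ∑ k ∈ Finset.range n,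
        (n.choose (k + 1) : R) * (-1) ^ k * ∏ l ∈ Finset.range k, a (j + l) := by
  set g : ℕ → R := fun n => ∑ k ∈ Finset.range n, f j k
  have hg : fwdDiff 1 g = f j := by
    ext n
    simp [g, fwdDiff, Finset.sum_range_succ]
  have := shift_eq_sum_fwdDiff_iter 1 g n 0
  rw [zero_add, smul_eq_mul, mul_one] at this
  change g n = _
  rw [this, Finset.sum_range_succ']
  simp only [Function.iterate_succ_apply, hg, fwdDiff_iter_eq_of_fwdDiff_eq hf, Pi.smul_apply, hf0]
  simp [g, mul_assoc]

theorem sum_range_choose_succ_eq_sum_Icc {R : Type*} [CommRing R] (b : ℕ → R) (n : ℕ) :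
    ∑ k ∈ Finset.range n, (n.choose (k + 1) : R) * (-1) ^ k * ∏ l ∈ Finset.range k, b (1 + l) =
      ∑ k ∈ Finset.Icc 1 n,
        (n.choose k : R) * (-1) ^ (k - 1) * ∏ j ∈ Finset.Icc 1 (k - 1), b j := by
  rw [← Finset.Ico_add_one_right_eq_Icc, Finset.sum_Ico_eq_sum_range, Nat.add_sub_cancel]
  refine Finset.sum_congr rfl fun k _ => ?_
  rw [← Finset.Ico_add_one_right_eq_Icc, Finset.prod_Ico_eq_prod_range]
  simp [add_comm 1 k]

-- The last chain record strictly before index `k`, with the origin playing the record before `q 0`.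
def chainLeader {d : ℕ} (q : ℕ → Fin d → ℝ) : ℕ → Fin d → ℝ
  | 0 => 0
  | k + 1 => if prec (chainLeader q k) (q k) then q k else chainLeader q k

section ChainLeader

variable {d : ℕ}

theorem chainLead_le (q : ℕ → Fin d → ℝ) (k : ℕ) : chainLead q k ≤ k := by
  induction k with
  | zero => rfl
  | succ k ih =>
    rw [chainLead]
    split_ifs <;> omega

theorem chainLeader_succ {q : ℕ → Fin d → ℝ} (h0 : prec 0 (q 0)) (k : ℕ) :
    chainLeader q (k + 1) = q (chainLead q k) := by
  induction k with
  | zero => simp [chainLeader, chainLead, h0]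
  | succ k ih =>
    rw [chainLeader, ih, chainLead]
    split_ifs <;> rfl

theorem chainLead_eq_self_iff {q : ℕ → Fin d → ℝ} (h0 : prec 0 (q 0)) (k : ℕ) :
    chainLead q k = k ↔ prec (chainLeader q k) (q k) := by
  cases k with
  | zero => simpa [chainLead, chainLeader] using h0
  | succ k =>
    rw [chainLeader_succ h0, chainLead]
    have := chainLead_le q k
    split_ifs with h <;> simp [h]; omega

theorem chainCount_eq_card {q : ℕ → Fin d → ℝ} (h0 : prec 0 (q 0)) (n : ℕ) :
    chainCount q n = ((Finset.range n).filter fun k => prec (chainLeader q k) (q k)).card := by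
  rw [chainCount]
  congr 1
  exact Finset.filter_congr fun k _ => chainLead_eq_self_iff h0 k

theorem chainLeader_mem {S : Set (Fin d → ℝ)} {q : ℕ → Fin d → ℝ} (h0 : 0 ∈ S) (hq : ∀ i, q i ∈ S)
    (k : ℕ) : chainLeader q k ∈ S := by
  induction k with
  | zero => exact h0
  | succ k ih =>
    rw [chainLeader]
    split_ifs
    exacts [hq k, ih]

theorem chainLeader_congr {q q' : ℕ → Fin d → ℝ} {k : ℕ} (h : ∀ i < k, q i = q' i) :
    chainLeader q k = chainLeader q' k := by
  induction k with
  | zero => rfl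
  | succ k ih =>
    rw [chainLeader, chainLeader, ih fun i hi => h i (by omega), h k k.lt_succ_self]

theorem measurable_chainLeader (k : ℕ) : Measurable fun q : ℕ → Fin d → ℝ => chainLeader q k := by
  induction k with
  | zero => exact measurable_const
  | succ k ih =>
    exact Measurable.ite (measurableSet_prec.preimage (ih.prodMk (measurable_pi_apply k)))
      (measurable_pi_apply k) ih

end ChainLeader

theorem ProbabilityTheory.IndepFun.integral_comp_eq_integral_integral
    {Ω α β E : Type*} [MeasurableSpace Ω] [MeasurableSpace α] [MeasurableSpace β]
    [NormedAddCommGroup E] [NormedSpace ℝ E] {P : Measure Ω} [IsFiniteMeasure P]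
    {X : Ω → α} {Y : Ω → β} (hXY : IndepFun X Y P) (hX : Measurable X) (hY : Measurable Y)
    {Φ : α × β → E} (hΦ : StronglyMeasurable Φ)
    (hint : Integrable Φ ((P.map X).prod (P.map Y))) :
    ∫ ω, Φ (X ω, Y ω) ∂P = ∫ ω, ∫ y, Φ (X ω, y) ∂(P.map Y) ∂P := by
  calc ∫ ω, Φ (X ω, Y ω) ∂P = ∫ z, Φ z ∂(P.map fun ω => (X ω, Y ω)) :=
        (integral_map (hX.prodMk hY).aemeasurable hΦ.aestronglyMeasurable).symm
    _ = ∫ z, Φ z ∂((P.map X).prod (P.map Y)) := by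
        rw [(indepFun_iff_map_prod_eq_prod_map_map hX.aemeasurable hY.aemeasurable).1 hXY]
    _ = ∫ x, ∫ y, Φ (x, y) ∂(P.map Y) ∂(P.map X) := integral_prod Φ hint
    _ = ∫ ω, ∫ y, Φ (X ω, y) ∂(P.map Y) ∂P :=
        integral_map hX.aemeasurable hΦ.integral_prod_right'.aestronglyMeasurable

section ChainRecords

variable {Ω : Type*} [MeasurableSpace Ω] {P : Measure Ω} {d : ℕ}
  {p : ℕ → Ω → Fin d → ℝ}

theorem indepFun_chainLeader (hmeas : ∀ n, Measurable (p n)) (hindep : iIndepFun p P) (k : ℕ) :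
    IndepFun (fun ω => chainLeader (fun i => p i ω) k) (p k) P := by
  have hpast := hindep.indepFun_finset (Finset.range k) {k} (by simp) hmeas
  let past : ((i : Finset.range k) → Fin d → ℝ) → Fin d → ℝ := fun v =>
    chainLeader (fun i => if h : i ∈ Finset.range k then v ⟨i, h⟩ else 0) k
  have hpast_meas : Measurable past := by
    refine (measurable_chainLeader k).comp (measurable_pi_lambda _ fun i => ?_)
    split_ifs
    exacts [measurable_pi_apply _, measurable_const]
  refine (hpast.comp hpast_meas (measurable_pi_apply ⟨k, Finset.mem_singleton_self k⟩)).congr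
    (.of_forall fun ω => chainLeader_congr fun i hi => ?_) .rfl
  simp [Finset.mem_range.2 hi]

theorem ae_forall_mem_simplex_prec_zero (hmeas : ∀ n, Measurable (p n))
    (hdist : ∀ n, P.map (p n) = unif (simplex d)) :
    ∀ᵐ ω ∂P, ∀ i, p i ω ∈ simplex d ∧ prec 0 (p i ω) :=
  ae_all_iff.2 fun i => ae_of_ae_map (hmeas i).aemeasurable (hdist i ▸ ae_unif_simplex d)

theorem integral_comp_chainLeader_eq_integral_integral [IsProbabilityMeasure P]
    (hmeas : ∀ n, Measurable (p n)) (hdist : ∀ n, P.map (p n) = unif (simplex d))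
    (hindep : iIndepFun p P) (k : ℕ)
    {Φ : (Fin d → ℝ) × (Fin d → ℝ) → ℝ} (hΦ : Measurable Φ) (C : ℝ) (hC : ∀ z, ‖Φ z‖ ≤ C) :
    ∫ ω, Φ (chainLeader (fun i => p i ω) k, p k ω) ∂P =
      ∫ ω, ∫ y, Φ (chainLeader (fun i => p i ω) k, y) ∂unif (simplex d) ∂P := by
  have hX : Measurable fun ω => chainLeader (fun i => p i ω) k :=
    (measurable_chainLeader k).comp (measurable_pi_lambda _ hmeas)
  have := Measure.isProbabilityMeasure_map (μ := P) hX.aemeasurable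
  rw [← hdist k]
  exact (indepFun_chainLeader hmeas hindep k).integral_comp_eq_integral_integral hX (hmeas k)
    hΦ.stronglyMeasurable (.of_bound hΦ.aestronglyMeasurable C (ae_of_all _ hC))

theorem ae_forall_chainLeader_mem_simplex (hmeas : ∀ n, Measurable (p n))
    (hdist : ∀ n, P.map (p n) = unif (simplex d)) :
    ∀ᵐ ω ∂P, ∀ k, chainLeader (fun i => p i ω) k ∈ simplex d := by
  filter_upwards [ae_forall_mem_simplex_prec_zero hmeas hdist] with ω hω
  exact chainLeader_mem (zero_mem_simplex d) fun i => (hω i).1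

theorem integrable_slackWeight_chainLeader [IsProbabilityMeasure P]
    (hmeas : ∀ n, Measurable (p n)) (m k : ℕ) :
    Integrable (fun ω => slackWeight d m (chainLeader (fun i => p i ω) k)) P :=
  .of_bound ((measurable_slackWeight m).comp ((measurable_chainLeader k).comp
    (measurable_pi_lambda _ hmeas))).aestronglyMeasurable 1
    (ae_of_all _ fun _ => norm_slackWeight_le_one m _)

theorem integral_slackWeight_chainLeader_succ [IsProbabilityMeasure P]
    (hmeas : ∀ n, Measurable (p n)) (hdist : ∀ n, P.map (p n) = unif (simplex d))
    (hindep : iIndepFun p P) (m k : ℕ) :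
    ∫ ω, slackWeight d m (chainLeader (fun i => p i ω) (k + 1)) ∂P =
      ∫ ω, slackWeight d m (chainLeader (fun i => p i ω) k) ∂P -
        (1 - slackMoment d m) * ∫ ω, slackWeight d (m + d) (chainLeader (fun i => p i ω) k) ∂P := by
  have hΦ : Measurable fun z : (Fin d → ℝ) × (Fin d → ℝ) =>
      slackWeight d m (if prec z.1 z.2 then z.2 else z.1) :=
    (measurable_slackWeight m).comp
      (Measurable.ite measurableSet_prec measurable_snd measurable_fst)
  rw [← integral_const_mul, ← integral_sub (integrable_slackWeight_chainLeader hmeas m k)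
    ((integrable_slackWeight_chainLeader hmeas (m + d) k).const_mul _)]
  refine (integral_comp_chainLeader_eq_integral_integral hmeas hdist hindep k hΦ 1
    fun _ => norm_slackWeight_le_one m _).trans (integral_congr_ae ?_)
  filter_upwards [ae_forall_chainLeader_mem_simplex hmeas hdist] with ω hω
  exact integral_slackWeight_ite_prec m (hω k)

theorem integral_chainCount [IsProbabilityMeasure P]
    (hmeas : ∀ n, Measurable (p n)) (hdist : ∀ n, P.map (p n) = unif (simplex d))
    (hindep : iIndepFun p P) (n : ℕ) :
    ∫ ω, (chainCount (fun i => p i ω) n : ℝ) ∂P =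
      ∑ k ∈ Finset.range n, ∫ ω, slackWeight d d (chainLeader (fun i => p i ω) k) ∂P := by
  set R := {z : (Fin d → ℝ) × (Fin d → ℝ) | prec z.1 z.2}
  have hcount : (fun ω => (chainCount (fun i => p i ω) n : ℝ)) =ᵐ[P]
      fun ω => ∑ k ∈ Finset.range n, R.indicator 1 (chainLeader (fun i => p i ω) k, p k ω) := by
    filter_upwards [ae_forall_mem_simplex_prec_zero hmeas hdist] with ω hω
    rw [chainCount_eq_card (hω 0).2, Finset.card_filter, Nat.cast_sum]
    refine Finset.sum_congr rfl fun k _ => ?_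
    simp [R, indicator_apply, apply_ite]
  have hind_meas : Measurable (R.indicator (1 : (Fin d → ℝ) × (Fin d → ℝ) → ℝ)) :=
    measurable_one.indicator measurableSet_prec
  have hind_le (z) : ‖R.indicator (1 : (Fin d → ℝ) × (Fin d → ℝ) → ℝ) z‖ ≤ 1 :=
    (norm_indicator_le_norm_self _ _).trans (by simp)
  have hint (k : ℕ) : Integrable
      (fun ω => R.indicator 1 (chainLeader (fun i => p i ω) k, p k ω)) P :=
    .of_bound (hind_meas.comp (((measurable_chainLeader k).comp
      (measurable_pi_lambda _ hmeas)).prodMk (hmeas k))).aestronglyMeasurable 1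
      (ae_of_all _ fun _ => hind_le _)
  rw [integral_congr_ae hcount, integral_finsetSum _ fun k _ => hint k]
  refine Finset.sum_congr rfl fun k _ => ?_
  refine (integral_comp_chainLeader_eq_integral_integral hmeas hdist hindep k hind_meas 1
    hind_le).trans (integral_congr_ae ?_)
  filter_upwards [ae_forall_chainLeader_mem_simplex hmeas hdist] with ω hω
  exact integral_indicator_prec_one (hω k)

end ChainRecords

theorem chain_records_mean_exact_simplex_general
    {Ω : Type*} [MeasurableSpace Ω] (P : Measure Ω) [IsProbabilityMeasure P]
    (d : ℕ) (p : ℕ → Ω → (Fin d → ℝ))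
    (hmeas : ∀ n, Measurable (p n))
    (hdist : ∀ n, P.map (p n) = unif (simplex d))
    (hindep : iIndepFun p P) :
    ∀ n : ℕ, 1 ≤ n →
      ∫ ω, (chainCount (fun i => p i ω) n : ℝ) ∂P =
        ∑ k ∈ Finset.Icc 1 n,
          (n.choose k : ℝ) * (-1 : ℝ) ^ (k - 1) *
            ∏ j ∈ Finset.Icc 1 (k - 1),
              (1 - (d.factorial : ℝ) / ∏ i ∈ Finset.Icc 1 d, ((d * j + i : ℕ) : ℝ)) := by
  intro n _
  set f : ℕ → ℕ → ℝ := fun j k => ∫ ω, slackWeight d (d * j) (chainLeader (fun i => p i ω) k) ∂P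
  have hf (j : ℕ) : fwdDiff 1 (f j) = -(1 - slackMoment d (d * j)) • f (j + 1) := by
    ext k
    simp only [fwdDiff, f, integral_slackWeight_chainLeader_succ hmeas hdist hindep, Nat.mul_succ,
      Pi.smul_apply, smul_eq_mul]
    ring
  have hf0 (j : ℕ) : f j 0 = 1 := by simp [f, chainLeader, slackWeight_zero]
  have hsum := sum_range_eq_sum_choose_of_fwdDiff_eq hf hf0 1 n
  simp only [f, mul_one] at hsum
  simp only [← slackMoment_eq_div_prod]
  rw [integral_chainCount hmeas hdist hindep, hsum]
  exact sum_range_choose_succ_eq_sum_Icc (fun j => 1 - slackMoment d (d * j)) n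

/-- Exact formula for the expected number of chain records for iud samples
from the `d`-dimensional simplex. -/
theorem chain_records_mean_exact_simplex
    {Ω : Type*} [MeasurableSpace Ω] (P : Measure Ω) [IsProbabilityMeasure P]
    (d : ℕ) (hd : 2 ≤ d) (p : ℕ → Ω → (Fin d → ℝ))
    (hmeas : ∀ n, Measurable (p n))
    (hdist : ∀ n, P.map (p n) = unif (simplex d))
    (hindep : iIndepFun p P) :
    ∀ n : ℕ, 1 ≤ n →
      ∫ ω, (chainCount (fun i => p i ω) n : ℝ) ∂P =
        ∑ k ∈ Finset.Icc 1 n,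
          (n.choose k : ℝ) * (-1 : ℝ) ^ (k - 1) *
            ∏ j ∈ Finset.Icc 1 (k - 1),
              (1 - (d.factorial : ℝ) / ∏ i ∈ Finset.Icc 1 d, ((d * j + i : ℕ) : ℝ)) :=
  chain_records_mean_exact_simplex_general P d p hmeas hdist hindep
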